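/- For each k = 1,…,6, the image φ_{k,2}(𝔻) of the closed unit disk is a closed disk of radius (14√3−15)/121; i.e., there exists c ∈ ℂ such that φ_{k,2}(𝔻) is the closed ball of center c and radius (14√3−15)/121. -/

import Mathlib

open Complex Metric Set
open scoped ENNReal

noncomputable section

/-- λ = √3 -/
def lam : ℝ := Real.sqrt 3

/-- The Möbius map f(z) = ((λ−1)z+1)/(−z+λ+1). -/
def apolF : ℂ → ℂ := fun z => (((lam : ℂ) - 1) * z + 1) / (-z + (lam : ℂ) + 1)

/-- Rotation by angle θ. -/
def Rot (θ : ℝ) : ℂ → ℂ := fun z => Complex.exp ((θ : ℂ) * Complex.I) * z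

/-- θ_k = (−1)^k · 2π/3 -/
def thetaA (k : ℕ) : ℝ := (-1 : ℝ) ^ k * (2 * Real.pi / 3)

/-- θ'_k = 2πk/3 -/
def thetaB (k : ℕ) : ℝ := 2 * Real.pi * k / 3

/-- The Apollonian generators φ_{k,n} = R_{θ'_k} ∘ f^n ∘ R_{θ_k} ∘ f. -/
def phi (k n : ℕ) : ℂ → ℂ := Rot (thetaB k) ∘ (apolF^[n]) ∘ Rot (thetaA k) ∘ apolF

/-- The closed unit disk 𝔻. -/
def unitD : Set ℂ := Metric.closedBall (0 : ℂ) 1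

/-!
On `𝔻` every map of the construction is a Möbius transformation whose pole lies outside `𝔻`
(`f` maps `𝔻` into itself), so `φ_{k,n}` agrees on `𝔻` with the Möbius transformation of the
matrix product `R_{θ'_k} F^n R_{θ_k} F`. A Möbius map `z ↦ (a z + b) / (c z + d)` with
`‖c‖ < ‖d‖` maps `𝔻` onto the closed disk of radius `‖a d - b c‖ / (‖d‖² - ‖c‖²)`. For `n = 2`
the determinant has modulus `3³`, and since `Re e^{iθ_k} = -1/2` the bottom row gives
`‖d‖² - ‖c‖² = 135 + 126√3`, so the radius is `27 / (135 + 126√3) = (14√3 - 15) / 121`.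
-/

open ComplexConjugate

def moebius (M : Matrix (Fin 2) (Fin 2) ℂ) (z : ℂ) : ℂ :=
  (M 0 0 * z + M 0 1) / (M 1 0 * z + M 1 1)

theorem moebius_div (M : Matrix (Fin 2) (Fin 2) ℂ) (p : ℂ) {q : ℂ} (hq : q ≠ 0) :
    moebius M (p / q) = (M 0 0 * p + M 0 1 * q) / (M 1 0 * p + M 1 1 * q) := by
  rw [moebius, mul_div_assoc', div_add' _ _ _ hq, mul_div_assoc', div_add' _ _ _ hq,
    div_div_div_cancel_right₀ hq]

theorem moebius_mul_apply (M N : Matrix (Fin 2) (Fin 2) ℂ) {z : ℂ}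
    (hz : N 1 0 * z + N 1 1 ≠ 0) : moebius (M * N) z = moebius M (moebius N z) := by
  rw [show moebius N z = _ / _ from rfl, moebius_div M _ hz]
  simp only [moebius, Matrix.mul_apply, Fin.sum_univ_two]
  congr 1 <;> ring

-- Completing the square: the Apollonius circle `‖d w - b‖ = ‖a - c w‖` is the circle of centre
-- `(b d̄ - a c̄) / K` and radius `‖a d - b c‖ / K`, where `K = ‖d‖² - ‖c‖²`.
theorem apollonius_circle_identity (a b c d w : ℂ) :
    (‖d‖ ^ 2 - ‖c‖ ^ 2) * (‖d * w - b‖ ^ 2 - ‖a - c * w‖ ^ 2) =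
      ‖((‖d‖ ^ 2 - ‖c‖ ^ 2 : ℝ) : ℂ) * w - (b * conj d - a * conj c)‖ ^ 2 - ‖a * d - b * c‖ ^ 2 := by
  simp only [Complex.sq_norm, Complex.normSq_apply, Complex.sub_re, Complex.sub_im, Complex.mul_re,
    Complex.mul_im, Complex.conj_re, Complex.conj_im, Complex.ofReal_re, Complex.ofReal_im]
  ring

section
variable {a b c d : ℂ}

theorem moebius_denom_ne_zero (hcd : ‖c‖ < ‖d‖) {z : ℂ} (hz : ‖z‖ ≤ 1) : c * z + d ≠ 0 := by
  intro h
  have : ‖d‖ ≤ ‖c‖ := by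
    calc ‖d‖ = ‖c * z‖ := by rw [eq_neg_of_add_eq_zero_right h, norm_neg]
      _ ≤ ‖c‖ := by rw [norm_mul]; exact mul_le_of_le_one_right (norm_nonneg c) hz
  exact this.not_gt hcd

theorem mem_moebius_image_closedBall_iff (hdet : a * d - b * c ≠ 0) (hcd : ‖c‖ < ‖d‖) (w : ℂ) :
    w ∈ moebius !![a, b; c, d] '' closedBall 0 1 ↔ ‖d * w - b‖ ≤ ‖a - c * w‖ := by
  constructor
  · rintro ⟨z, hz, rfl⟩
    rw [mem_closedBall_zero_iff] at hz
    have hq := moebius_denom_ne_zero hcd hz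
    have hw : moebius !![a, b; c, d] z = (a * z + b) / (c * z + d) := rfl
    have h1 : d * moebius !![a, b; c, d] z - b = (a * d - b * c) * z / (c * z + d) := by
      rw [hw, mul_div_assoc', div_sub' hq]; congr 1; ring
    have h2 : a - c * moebius !![a, b; c, d] z = (a * d - b * c) / (c * z + d) := by
      rw [hw, mul_div_assoc', sub_div' hq]; congr 1; ring
    rw [h1, h2, norm_div, norm_div, norm_mul]
    gcongr
    exact mul_le_of_le_one_right (norm_nonneg _) hz
  · intro hw
    have hne : a - c * w ≠ 0 := by
      intro h0
      have hb : d * w - b = 0 := norm_le_zero_iff.mp (by simpa [h0] using hw)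
      exact hdet (by linear_combination d * h0 + c * hb)
    -- the preimage under the inverse map, whose matrix is the adjugate
    refine ⟨(d * w - b) / (a - c * w), ?_, ?_⟩
    · rw [mem_closedBall_zero_iff, norm_div]
      exact div_le_one_of_le₀ hw (norm_nonneg _)
    · rw [moebius_div _ _ hne, div_eq_iff]
      · simp only [Matrix.of_apply, Matrix.cons_val_zero, Matrix.cons_val_one]
        ring
      · simp only [Matrix.of_apply, Matrix.cons_val_zero, Matrix.cons_val_one]
        convert hdet using 1; ring

theorem moebius_image_closedBall (hdet : a * d - b * c ≠ 0) (hcd : ‖c‖ < ‖d‖) :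
    moebius !![a, b; c, d] '' closedBall 0 1 =
      closedBall ((b * conj d - a * conj c) / ((‖d‖ ^ 2 - ‖c‖ ^ 2 : ℝ) : ℂ))
        (‖a * d - b * c‖ / (‖d‖ ^ 2 - ‖c‖ ^ 2)) := by
  set K := ‖d‖ ^ 2 - ‖c‖ ^ 2
  have hK : 0 < K := sub_pos.2 (pow_lt_pow_left₀ hcd (norm_nonneg _) two_ne_zero)
  have hK' : (K : ℂ) ≠ 0 := ofReal_ne_zero.2 hK.ne'
  ext w
  have hid := apollonius_circle_identity a b c d w
  rw [mem_moebius_image_closedBall_iff hdet hcd, mem_closedBall, dist_eq,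
    show w - (b * conj d - a * conj c) / K = (K * w - (b * conj d - a * conj c)) / K by
      field_simp,
    norm_div, norm_real, Real.norm_of_nonneg hK.le, div_le_div_iff_of_pos_right hK,
    ← sq_le_sq₀ (norm_nonneg _) (norm_nonneg _), ← sq_le_sq₀ (norm_nonneg _) (norm_nonneg _)]
  constructor <;> intro h <;> nlinarith

end

theorem lam_sq : lam ^ 2 = 3 := Real.sq_sqrt (by norm_num)

theorem one_lt_lam : 1 < lam := by
  rw [lam, Real.lt_sqrt zero_le_one]; norm_num

def apolMatrix : Matrix (Fin 2) (Fin 2) ℂ := !![(lam : ℂ) - 1, 1; -1, (lam : ℂ) + 1]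

def rotMatrix (ζ : ℂ) : Matrix (Fin 2) (Fin 2) ℂ := !![ζ, 0; 0, 1]

def phiMatrix (k n : ℕ) : Matrix (Fin 2) (Fin 2) ℂ :=
  rotMatrix (exp (thetaB k * I)) * apolMatrix ^ n * rotMatrix (exp (thetaA k * I)) * apolMatrix

theorem apolF_eq_moebius : apolF = moebius apolMatrix := by
  funext z
  simp only [apolF, moebius, apolMatrix, Matrix.of_apply, Matrix.cons_val_zero, Matrix.cons_val_one]
  ring_nf

theorem rot_eq_moebius (θ : ℝ) : Rot θ = moebius (rotMatrix (exp (θ * I))) := by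
  funext z
  simp [Rot, moebius, rotMatrix]

theorem apolMatrix_denom_ne_zero {z : ℂ} (hz : z ∈ unitD) :
    apolMatrix 1 0 * z + apolMatrix 1 1 ≠ 0 := by
  refine moebius_denom_ne_zero ?_ (mem_closedBall_zero_iff.1 hz)
  simp only [apolMatrix, Matrix.of_apply, Matrix.cons_val_zero, Matrix.cons_val_one, norm_neg,
    norm_one]
  rw [← ofReal_one, ← ofReal_add, norm_real, Real.norm_of_nonneg (by linarith [one_lt_lam])]
  linarith [one_lt_lam]

theorem apolF_mapsTo : MapsTo apolF unitD unitD := by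
  intro z hz
  rw [unitD, mem_closedBall_zero_iff] at hz ⊢
  have hlam := one_lt_lam
  have hnum : ‖((lam : ℂ) - 1) * z + 1‖ ≤ lam := by
    calc ‖((lam : ℂ) - 1) * z + 1‖ ≤ (lam - 1) * ‖z‖ + 1 := by
          refine (norm_add_le _ _).trans ?_
          rw [norm_one, norm_mul, ← ofReal_one, ← ofReal_sub, norm_real,
            Real.norm_of_nonneg (by linarith)]
      _ ≤ lam := by nlinarith
  have hden : lam ≤ ‖-z + lam + 1‖ := by
    calc lam ≤ (lam + 1) - ‖z‖ := by linarith
      _ = ‖((lam + 1 : ℝ) : ℂ)‖ - ‖z‖ := by rw [norm_real, Real.norm_of_nonneg (by linarith)]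
      _ ≤ ‖-z + lam + 1‖ := by
          refine (norm_sub_norm_le _ _).trans_eq ?_
          push_cast; ring_nf
  rw [apolF, norm_div]
  exact div_le_one_of_le₀ (hnum.trans hden) (norm_nonneg _)

theorem rot_mapsTo (θ : ℝ) : MapsTo (Rot θ) unitD unitD := by
  intro z hz
  rwa [unitD, mem_closedBall_zero_iff, Rot, norm_mul, norm_exp_ofReal_mul_I, one_mul,
    ← mem_closedBall_zero_iff]

theorem moebius_mul_apolMatrix_pow_eqOn (M : Matrix (Fin 2) (Fin 2) ℂ) (n : ℕ) :
    EqOn (moebius M ∘ apolF^[n]) (moebius (M * apolMatrix ^ n)) unitD := by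
  induction n with
  | zero => intro z _; simp
  | succ n ih =>
    intro z hz
    rw [pow_succ, ← mul_assoc, moebius_mul_apply _ _ (apolMatrix_denom_ne_zero hz),
      ← apolF_eq_moebius, ← ih (apolF_mapsTo hz)]
    rfl

theorem phi_eqOn_moebius (k n : ℕ) : EqOn (phi k n) (moebius (phiMatrix k n)) unitD := by
  intro z hz
  have hw : Rot (thetaA k) (apolF z) ∈ unitD := rot_mapsTo _ (apolF_mapsTo hz)
  rw [phiMatrix, moebius_mul_apply _ _ (apolMatrix_denom_ne_zero hz), ← apolF_eq_moebius,
    moebius_mul_apply _ _ (by simp [rotMatrix]), ← rot_eq_moebius,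
    ← moebius_mul_apolMatrix_pow_eqOn _ n hw, ← rot_eq_moebius]
  rfl

theorem norm_det_phiMatrix (k n : ℕ) : ‖(phiMatrix k n).det‖ = 3 ^ (n + 1) := by
  have hF : apolMatrix.det = 3 := by
    have h : (lam : ℂ) ^ 2 = 3 := by exact_mod_cast lam_sq
    rw [apolMatrix, Matrix.det_fin_two_of]
    linear_combination h
  have hR (θ : ℝ) : ‖(rotMatrix (exp (θ * I))).det‖ = 1 := by
    simp [rotMatrix, Matrix.det_fin_two_of, norm_exp_ofReal_mul_I]
  rw [phiMatrix, Matrix.det_mul, Matrix.det_mul, Matrix.det_mul, Matrix.det_pow, hF, norm_mul,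
    norm_mul, norm_mul, hR, hR, norm_pow]
  norm_num [pow_succ]

theorem re_exp_thetaA (k : ℕ) : (exp (thetaA k * I)).re = -1 / 2 := by
  rw [exp_ofReal_mul_I_re, thetaA]
  rcases neg_one_pow_eq_or ℝ k with h | h <;> rw [h]
  all_goals
    simp only [one_mul, neg_one_mul, Real.cos_neg]
    rw [show 2 * Real.pi / 3 = Real.pi - Real.pi / 3 by ring, Real.cos_pi_sub,
      Real.cos_pi_div_three]
    norm_num

theorem norm_sq_ofReal_mul_add_ofReal {ω : ℂ} (hω : ‖ω‖ = 1) (hre : ω.re = -1 / 2) (p q : ℝ) :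
    ‖(p : ℂ) * ω + q‖ ^ 2 = p ^ 2 - p * q + q ^ 2 := by
  have him : ω.im ^ 2 = 3 / 4 := by
    have := congrArg (· ^ 2) hω
    simp only [Complex.sq_norm, Complex.normSq_apply, hre] at this
    linarith
  simp only [Complex.sq_norm, Complex.normSq_apply, Complex.add_re, Complex.add_im,
    Complex.mul_re, Complex.mul_im, Complex.ofReal_re, Complex.ofReal_im, hre]
  linear_combination p ^ 2 * him

theorem phiMatrix_two_one_zero (k : ℕ) :
    phiMatrix k 2 1 0 = ((2 * lam - 6 : ℝ) : ℂ) * exp (thetaA k * I) + ((-3 - 2 * lam : ℝ) : ℂ) := by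
  have h : (lam : ℂ) ^ 2 = 3 := by exact_mod_cast lam_sq
  rw [phiMatrix, rotMatrix, rotMatrix, apolMatrix, sq]
  simp only [Matrix.mul_fin_two, Matrix.of_apply, Matrix.cons_val_zero, Matrix.cons_val_one]
  push_cast
  linear_combination (-1 - 2 * exp (thetaA k * I)) * h

theorem phiMatrix_two_one_one (k : ℕ) :
    phiMatrix k 2 1 1 = ((-2 * lam : ℝ) : ℂ) * exp (thetaA k * I) + ((9 + 5 * lam : ℝ) : ℂ) := by
  have h : (lam : ℂ) ^ 2 = 3 := by exact_mod_cast lam_sq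
  rw [phiMatrix, rotMatrix, rotMatrix, apolMatrix, sq]
  simp only [Matrix.mul_fin_two, Matrix.of_apply, Matrix.cons_val_zero, Matrix.cons_val_one]
  push_cast
  linear_combination ((lam : ℂ) + 3) * h

theorem apollonian_second_disk_general (k : ℕ) :
    ∃ c : ℂ, phi k 2 '' unitD = Metric.closedBall c ((14 * Real.sqrt 3 - 15) / 121) := by
  have hω := norm_exp_ofReal_mul_I (thetaA k)
  have hC : ‖phiMatrix k 2 1 0‖ ^ 2 = 63 - 18 * lam := by
    rw [phiMatrix_two_one_zero, norm_sq_ofReal_mul_add_ofReal hω (re_exp_thetaA k)]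
    linear_combination 12 * lam_sq
  have hD : ‖phiMatrix k 2 1 1‖ ^ 2 = 198 + 108 * lam := by
    rw [phiMatrix_two_one_one, norm_sq_ofReal_mul_add_ofReal hω (re_exp_thetaA k)]
    linear_combination 39 * lam_sq
  have hlam := one_lt_lam
  have hCD : ‖phiMatrix k 2 1 0‖ < ‖phiMatrix k 2 1 1‖ :=
    lt_of_pow_lt_pow_left₀ 2 (norm_nonneg _) (by rw [hC, hD]; linarith)
  have hdet : ‖(phiMatrix k 2).det‖ = 27 := by rw [norm_det_phiMatrix]; norm_num
  have hdet_entries := Matrix.det_fin_two (phiMatrix k 2)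
  rw [(phi_eqOn_moebius k 2).image_eq, Matrix.eta_fin_two (phiMatrix k 2), unitD,
    moebius_image_closedBall (by rw [← hdet_entries, ← norm_ne_zero_iff, hdet]; norm_num) hCD,
    ← hdet_entries, hdet, hC, hD]
  refine ⟨_, congrArg _ ?_⟩
  rw [← lam, div_eq_div_iff (by linarith) (by norm_num)]
  linear_combination -1764 * lam_sq

/-- φ_{k,2}(𝔻) is a closed disk of radius (14√3−15)/121. -/
theorem apollonian_second_disk (k : ℕ) (hk1 : 1 ≤ k) (hk6 : k ≤ 6) :
    ∃ c : ℂ, phi k 2 '' unitD = Metric.closedBall c ((14 * Real.sqrt 3 - 15) / 121) :=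
  apollonian_second_disk_general k
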